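/- arXiv:1507.02103 — 8 statements merged into one kernel-verified Lean document; each statement's English description precedes it below -/
import Mathlib

section
/- Anonymity of generalized degree: if the network (σN, σA) is obtained from the network (N,A) by relabelling the nodes via a permutation σ : N → N (so its adjacency matrix satisfies (σA)_{σi, σj} = a_{ij} for all i, j), then x_{σi}(ε)(σN, σA) = x_i(ε)(N, A) for all nodes i ∈ N and every ε > 0. -/
open Matrix Filter

/-- A network on `n` nodes: a symmetric, loopless 0-1 adjacency matrix. -/
def IsNetwork {n : ℕ} (A : Matrix (Fin n) (Fin n) ℝ) : Prop :=
  (∀ i j, A i j = A j i) ∧ (∀ i, A i i = 0) ∧ (∀ i j, A i j = 0 ∨ A i j = 1)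

/-- Degree of node `i`: the `i`-th entry of `A · e`. -/
def deg {n : ℕ} (A : Matrix (Fin n) (Fin n) ℝ) (i : Fin n) : ℝ :=
  ∑ j, A i j

/-- The Laplacian matrix of the network: `ℓ_{ii} = d_i`, `ℓ_{ij} = -a_{ij}` for `i ≠ j`. -/
def lap {n : ℕ} (A : Matrix (Fin n) (Fin n) ℝ) : Matrix (Fin n) (Fin n) ℝ :=
  Matrix.diagonal (deg A) - A

lemma lap_mulVec {n : ℕ} (A : Matrix (Fin n) (Fin n) ℝ) (v : Fin n → ℝ) (i : Fin n) :
    (lap A).mulVec v i = deg A i * v i - ∑ j, A i j * v j := by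
  simp [lap, Matrix.mulVec, dotProduct, Matrix.sub_apply, Matrix.diagonal_apply,
    sub_mul, Finset.sum_sub_distrib]

lemma lap_quad_nonneg {n : ℕ} (A : Matrix (Fin n) (Fin n) ℝ) (hA : IsNetwork A)
    (v : Fin n → ℝ) : 0 ≤ ∑ i, v i * (lap A).mulVec v i := by
  have hAnn : ∀ i j, 0 ≤ A i j := by
    intro i j; rcases hA.2.2 i j with h | h <;> rw [h] <;> norm_num
  have hsym : ∑ i, ∑ j, A i j * (v j)^2 = ∑ i, ∑ j, A i j * (v i)^2 := by
    rw [Finset.sum_comm]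
    exact Finset.sum_congr rfl fun i _ => Finset.sum_congr rfl fun j _ => by rw [hA.1 j i]
  have key : ∑ i, v i * (lap A).mulVec v i = (∑ i, ∑ j, A i j * (v i - v j)^2) / 2 := by
    have h1 : ∑ i, v i * (lap A).mulVec v i
        = ∑ i, ∑ j, (A i j * (v i)^2 - A i j * (v i * v j)) := by
      refine Finset.sum_congr rfl fun i _ => ?_
      rw [lap_mulVec, deg, Finset.sum_mul, ← Finset.sum_sub_distrib, Finset.mul_sum]
      exact Finset.sum_congr rfl fun j _ => by ring
    have h2 : ∑ i, ∑ j, A i j * (v i - v j)^2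
        = ∑ i, ∑ j, (A i j * (v i)^2 - 2 * (A i j * (v i * v j)) + A i j * (v j)^2) := by
      refine Finset.sum_congr rfl fun i _ => Finset.sum_congr rfl fun j _ => by ring
    have h3 : ∑ i, ∑ j, 2 * (A i j * (v i * v j)) = 2 * ∑ i, ∑ j, A i j * (v i * v j) := by
      simp [Finset.mul_sum]
    rw [h1, h2]
    simp only [Finset.sum_sub_distrib, Finset.sum_add_distrib]
    rw [hsym, h3]
    ring
  rw [key]
  apply div_nonneg _ (by norm_num)
  refine Finset.sum_nonneg fun i _ => Finset.sum_nonneg fun j _ => ?_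
  exact mul_nonneg (hAnn i j) (sq_nonneg _)

lemma ker_trivial {n : ℕ} (A : Matrix (Fin n) (Fin n) ℝ) (hA : IsNetwork A)
    (ε : ℝ) (hε : 0 < ε) (w : Fin n → ℝ)
    (hw : ((1 : Matrix (Fin n) (Fin n) ℝ) + ε • lap A).mulVec w = 0) :
    w = 0 := by
  have hsum : ∑ i, w i * (((1 : Matrix (Fin n) (Fin n) ℝ) + ε • lap A).mulVec w i) = 0 := by
    rw [hw]; simp
  have hexp : ∀ i, ((1 : Matrix (Fin n) (Fin n) ℝ) + ε • lap A).mulVec w i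
      = w i + ε * (lap A).mulVec w i := by
    intro i
    rw [Matrix.add_mulVec, Matrix.smul_mulVec]
    simp [Matrix.one_mulVec]
  have h1 : ∑ i, (w i * w i + ε * (w i * (lap A).mulVec w i)) = 0 := by
    rw [← hsum]
    exact Finset.sum_congr rfl fun i _ => by rw [hexp]; ring
  rw [Finset.sum_add_distrib, ← Finset.mul_sum] at h1
  have hq := lap_quad_nonneg A hA w
  have hsq : ∑ i, w i * w i ≤ 0 := by nlinarith
  have : ∀ i ∈ Finset.univ, w i * w i = 0 := by
    intro i _
    have := Finset.sum_nonneg (fun i (_ : i ∈ Finset.univ) => mul_self_nonneg (w i))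
    have hle : w i * w i ≤ ∑ j, w j * w j :=
      Finset.single_le_sum (fun j _ => mul_self_nonneg (w j)) (Finset.mem_univ i)
    nlinarith [mul_self_nonneg (w i)]
  funext i
  have := this i (Finset.mem_univ i)
  have := mul_self_eq_zero.mp this
  simpa using this

/-- Anonymity of generalized degree: relabelling the nodes by a permutation `σ`
permutes the generalized degrees accordingly. -/
theorem generalizedDegree_anonymity
    {n : ℕ} (A A' : Matrix (Fin n) (Fin n) ℝ)
    (hA : IsNetwork A) (hA' : IsNetwork A')
    (σ : Equiv.Perm (Fin n)) (hσ : ∀ i j : Fin n, A' (σ i) (σ j) = A i j)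
    (ε : ℝ) (hε : 0 < ε) (x x' : Fin n → ℝ)
    (hx : ((1 : Matrix (Fin n) (Fin n) ℝ) + ε • lap A).mulVec x = deg A)
    (hx' : ((1 : Matrix (Fin n) (Fin n) ℝ) + ε • lap A').mulVec x' = deg A') :
    ∀ i : Fin n, x' (σ i) = x i := by
  set y : Fin n → ℝ := fun i => x' (σ i) with hy
  have hdeg : ∀ i, deg A' (σ i) = deg A i := by
    intro i
    unfold deg
    rw [← Equiv.sum_comp σ (fun j => A' (σ i) j)]
    exact Finset.sum_congr rfl fun j _ => hσ i j
  have hexp : ∀ (B : Matrix (Fin n) (Fin n) ℝ) (v : Fin n → ℝ) (i : Fin n),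
      ((1 : Matrix (Fin n) (Fin n) ℝ) + ε • lap B).mulVec v i
      = v i + ε * (deg B i * v i - ∑ j, B i j * v j) := by
    intro B v i
    rw [Matrix.add_mulVec, Matrix.smul_mulVec]
    simp [Matrix.one_mulVec, lap_mulVec]
  have hy_eq : ((1 : Matrix (Fin n) (Fin n) ℝ) + ε • lap A).mulVec y = deg A := by
    funext i
    have h := congrFun hx' (σ i)
    rw [hexp] at h
    rw [hexp]
    have hs : ∑ j, A' (σ i) j * x' j = ∑ j, A i j * y j := by
      rw [← Equiv.sum_comp σ (fun j => A' (σ i) j * x' j)]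
      exact Finset.sum_congr rfl fun j _ => by rw [hσ i j]
    rw [hs, hdeg] at h
    exact h
  have hker : ((1 : Matrix (Fin n) (Fin n) ℝ) + ε • lap A).mulVec (y - x) = 0 := by
    rw [Matrix.mulVec_sub, hy_eq, hx, sub_self]
  have := ker_trivial A hA ε hε (y - x) hker
  intro i
  have h := congrFun this i
  simpa [hy, sub_eq_zero] using h
end

section
/- Degree preservation: for every network on n nodes and every parameter ε > 0, the generalized degree centrality satisfies ∑_{i ∈ N} x_i(ε) = ∑_{i ∈ N} d_i. -/
open Matrix Filter

/-- Degree preservation: the generalized degrees sum to the sum of degrees. -/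
theorem generalizedDegree_degree_preservation
    {n : ℕ} (A : Matrix (Fin n) (Fin n) ℝ) (hA : IsNetwork A)
    (ε : ℝ) (hε : 0 < ε) (x : Fin n → ℝ)
    (hx : ((1 : Matrix (Fin n) (Fin n) ℝ) + ε • lap A).mulVec x = deg A) :
    ∑ i, x i = ∑ i, deg A i := by
  have hsum : ∑ i, ((1 : Matrix (Fin n) (Fin n) ℝ) + ε • lap A).mulVec x i
      = ∑ i, deg A i := by rw [hx]
  have hcol : ∀ j, ∑ i, lap A i j = 0 := by
    intro j
    simp only [lap, Matrix.sub_apply, Finset.sum_sub_distrib]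
    have hd : ∑ i, Matrix.diagonal (deg A) i j = deg A j := by
      simp [Matrix.diagonal_apply, Finset.sum_ite_eq']
    have ha : ∑ i, A i j = deg A j := by
      simp only [deg]; exact Finset.sum_congr rfl (fun i _ => hA.1 i j)
    rw [hd, ha, sub_self]
  have key : ∑ i, ((1 : Matrix (Fin n) (Fin n) ℝ) + ε • lap A).mulVec x i = ∑ i, x i := by
    simp only [Matrix.mulVec, dotProduct]
    rw [Finset.sum_comm]
    refine Finset.sum_congr rfl fun j _ => ?_
    rw [← Finset.sum_mul]
    have h1 : ∑ i, ((1 : Matrix (Fin n) (Fin n) ℝ) + ε • lap A) i j = 1 := by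
      simp only [Matrix.add_apply, Matrix.smul_apply, smul_eq_mul, Finset.sum_add_distrib,
        ← Finset.mul_sum, hcol j, mul_zero, add_zero, Matrix.one_apply]
      simp [Finset.sum_ite_eq']
    rw [h1, one_mul]
  rw [← hsum, key]
end

section
/- Zero presumption: for every network on n nodes, every parameter ε > 0 and every node i ∈ N, the generalized degree satisfies x_i(ε) = 0 if and only if d_i = 0, i.e. if and only if i is an isolated node. -/
open Matrix Filter

/-- Zero presumption: a node has zero generalized degree iff it has zero degree,
i.e. iff it is an isolated node. -/
theorem generalizedDegree_zero_presumption
    {n : ℕ} (A : Matrix (Fin n) (Fin n) ℝ) (hA : IsNetwork A)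
    (ε : ℝ) (hε : 0 < ε) (x : Fin n → ℝ)
    (hx : ((1 : Matrix (Fin n) (Fin n) ℝ) + ε • lap A).mulVec x = deg A) :
    ∀ i : Fin n, (x i = 0 ↔ deg A i = 0) ∧ (deg A i = 0 ↔ ∀ j, A i j = 0) := by
  obtain ⟨hsym, hdiag, h01⟩ := hA
  have hAnn : ∀ i j, 0 ≤ A i j := fun i j => by rcases h01 i j with h | h <;> simp [h]
  have hdnn : ∀ i, 0 ≤ deg A i := fun i => Finset.sum_nonneg fun j _ => hAnn i j
  have heq : ∀ i, x i + ε * (deg A i * x i - ∑ j, A i j * x j) = deg A i := by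
    intro i
    have h := congrFun hx i
    simp only [Matrix.add_mulVec, Matrix.smul_mulVec, Matrix.one_mulVec, lap,
      Matrix.sub_mulVec, Pi.add_apply, Pi.smul_apply, Pi.sub_apply,
      Matrix.mulVec_diagonal, smul_eq_mul] at h
    simpa [Matrix.mulVec, dotProduct] using h
  have hdeg_iff : ∀ i, deg A i = 0 ↔ ∀ j, A i j = 0 := by
    intro i
    constructor
    · intro h j
      have := (Finset.sum_eq_zero_iff_of_nonneg (fun j _ => hAnn i j)).mp h
      exact this j (Finset.mem_univ j)
    · intro h
      simp [deg, h]
  have hxnn : ∀ j, 0 ≤ x j := by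
    intro j0
    obtain ⟨m, _, hm⟩ := Finset.exists_min_image Finset.univ x ⟨j0, Finset.mem_univ j0⟩
    have hm' : ∀ k, x m ≤ x k := fun k => hm k (Finset.mem_univ k)
    have key : deg A m * x m ≤ ∑ j, A m j * x j := by
      rw [deg, Finset.sum_mul]
      exact Finset.sum_le_sum fun j _ => mul_le_mul_of_nonneg_left (hm' j) (hAnn m j)
    have hxm : 0 ≤ x m := by
      have h := heq m
      nlinarith [hdnn m, mul_nonpos_of_nonneg_of_nonpos hε.le (by linarith : deg A m * x m - ∑ j, A m j * x j ≤ 0)]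
    exact le_trans hxm (hm' j0)
  intro i
  refine ⟨⟨fun hxi => ?_, fun hdi => ?_⟩, hdeg_iff i⟩
  · have h := heq i
    rw [hxi] at h
    have hS : 0 ≤ ∑ j, A i j * x j :=
      Finset.sum_nonneg fun j _ => mul_nonneg (hAnn i j) (hxnn j)
    nlinarith [hdnn i]
  · have hS : ∑ j, A i j * x j = 0 := by
      have := (hdeg_iff i).mp hdi
      simp [this]
    have h := heq i
    rw [hdi, hS] at h
    simpa using h
end

section
/- Boundedness: for every network on n ≥ 1 nodes, every parameter ε > 0 and every node j ∈ N, the generalized degree satisfies min{d_i : i ∈ N} ≤ x_j(ε) ≤ max{d_i : i ∈ N}. -/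
open Matrix Filter

lemma key_entry {n : ℕ} (A : Matrix (Fin n) (Fin n) ℝ) (ε : ℝ) (x : Fin n → ℝ)
    (hx : ((1 : Matrix (Fin n) (Fin n) ℝ) + ε • lap A).mulVec x = deg A) (j : Fin n) :
    x j + ε * (deg A j * x j - ∑ k, A j k * x k) = deg A j := by
  have h := congrFun hx j
  simp only [Matrix.mulVec, dotProduct, Matrix.add_apply, Matrix.smul_apply, lap,
    Matrix.sub_apply, Matrix.diagonal_apply, Matrix.one_apply, smul_eq_mul, add_mul, mul_sub,
    sub_mul, ite_mul, zero_mul, one_mul, mul_ite, mul_zero, Finset.sum_add_distrib,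
    Finset.sum_sub_distrib, Finset.sum_ite_eq, Finset.mem_univ, if_true] at h
  simp only [mul_assoc] at h
  simp only [deg] at h ⊢
  rw [mul_sub, Finset.mul_sum]
  linarith [h]

/-- Boundedness: every generalized degree lies between the minimal and maximal degree. -/
theorem generalizedDegree_boundedness
    {n : ℕ} (hn : 0 < n) (A : Matrix (Fin n) (Fin n) ℝ) (hA : IsNetwork A)
    (ε : ℝ) (hε : 0 < ε) (x : Fin n → ℝ)
    (hx : ((1 : Matrix (Fin n) (Fin n) ℝ) + ε • lap A).mulVec x = deg A) :
    ∀ j : Fin n, (⨅ i, deg A i) ≤ x j ∧ x j ≤ ⨆ i, deg A i := by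
  have : Nonempty (Fin n) := ⟨⟨0, hn⟩⟩
  have hApos : ∀ i k, 0 ≤ A i k := fun i k => by rcases hA.2.2 i k with h | h <;> simp [h]
  obtain ⟨jM, hjM⟩ := Finite.exists_max x
  obtain ⟨jm, hjm⟩ := Finite.exists_min x
  have hM : x jM ≤ deg A jM := by
    have h := key_entry A ε x hx jM
    have hsum : ∑ k, A jM k * x k ≤ deg A jM * x jM := by
      rw [deg, Finset.sum_mul]
      exact Finset.sum_le_sum fun k _ => mul_le_mul_of_nonneg_left (hjM k) (hApos jM k)
    nlinarith
  have hm : deg A jm ≤ x jm := by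
    have h := key_entry A ε x hx jm
    have hsum : deg A jm * x jm ≤ ∑ k, A jm k * x k := by
      rw [deg, Finset.sum_mul]
      exact Finset.sum_le_sum fun k _ => mul_le_mul_of_nonneg_left (hjm k) (hApos jm k)
    nlinarith
  intro j
  constructor
  · calc (⨅ i, deg A i) ≤ deg A jm := ciInf_le (Set.finite_range _).bddBelow jm
    _ ≤ x jm := hm
    _ ≤ x j := hjm j
  · calc x j ≤ x jM := hjM j
    _ ≤ deg A jM := hM
    _ ≤ ⨆ i, deg A i := le_ciSup (Set.finite_range _).bddAbove jM
end

section
/- Strict boundedness: for every network on n ≥ 1 nodes, every parameter ε > 0 and every node j ∈ N: if there exists a path in the graph from j to some node k with d_k > min{d_i : i ∈ N}, then min{d_i : i ∈ N} < x_j(ε); and if there exists a path from j to some node k with d_k < max{d_i : i ∈ N}, then x_j(ε) < max{d_i : i ∈ N}. -/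
open Matrix Filter

lemma key_min {n : ℕ} (hn : 0 < n) (a : Matrix (Fin n) (Fin n) ℝ)
    (hnn : ∀ i j, 0 ≤ a i j)
    (c : Fin n → ℝ) (ε : ℝ) (hε : 0 < ε) (x : Fin n → ℝ)
    (heq : ∀ i, x i + ε * ((∑ j, a i j) * x i - ∑ j, a i j * x j) = c i) :
    ∀ j k : Fin n, Relation.ReflTransGen (fun p q => a p q = 1) j k →
      (⨅ i, c i) < c k → (⨅ i, c i) < x j := by
  have : Nonempty (Fin n) := ⟨⟨0, hn⟩⟩
  set m := ⨅ i, c i with hm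
  have hbdd : BddBelow (Set.range c) := (Set.finite_range c).bddBelow
  have hmc : ∀ i, m ≤ c i := fun i => ciInf_le hbdd i
  obtain ⟨i0, hi0⟩ := Finite.exists_min x
  have hxm : ∀ i, m ≤ x i := by
    have hS : (∑ j, a i0 j) * x i0 ≤ ∑ j, a i0 j * x j := by
      rw [Finset.sum_mul]
      exact Finset.sum_le_sum fun j _ => mul_le_mul_of_nonneg_left (hi0 j) (hnn i0 j)
    have h1 := heq i0
    have hT : ε * ((∑ j, a i0 j) * x i0 - ∑ j, a i0 j * x j) ≤ 0 :=
      mul_nonpos_iff.mpr (Or.inl ⟨hε.le, by linarith⟩)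
    have h2 : c i0 ≤ x i0 := by linarith
    intro i; exact le_trans (le_trans (hmc i0) h2) (hi0 i)
  have hstep : ∀ j, x j = m → c j = m ∧ ∀ k, a j k = 1 → x k = m := by
    intro j hj
    have hS : (∑ k, a j k) * m ≤ ∑ k, a j k * x k := by
      rw [Finset.sum_mul]
      exact Finset.sum_le_sum fun k _ => mul_le_mul_of_nonneg_left (hxm k) (hnn j k)
    have h1 := heq j
    rw [hj] at h1
    have hT : ε * ((∑ k, a j k) * m - ∑ k, a j k * x k) ≤ 0 :=
      mul_nonpos_iff.mpr (Or.inl ⟨hε.le, by linarith⟩)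
    have hc : c j = m := le_antisymm (by linarith) (hmc j)
    have hT0 : (∑ k, a j k) * m - ∑ k, a j k * x k = 0 := by
      have h0 : ε * ((∑ k, a j k) * m - ∑ k, a j k * x k) = 0 := by linarith
      exact (mul_eq_zero.mp h0).resolve_left hε.ne'
    have hSeq : ∑ k, a j k * x k = (∑ k, a j k) * m := by linarith
    refine ⟨hc, fun k hk => ?_⟩
    by_contra hne
    have hlt : m < x k := lt_of_le_of_ne (hxm k) (Ne.symm hne)
    have hlt2 : (∑ i, a j i) * m < ∑ i, a j i * x i := by
      rw [Finset.sum_mul]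
      refine Finset.sum_lt_sum (fun i _ => mul_le_mul_of_nonneg_left (hxm i) (hnn j i))
        ⟨k, Finset.mem_univ k, ?_⟩
      rw [hk]; simpa using hlt
    linarith [hSeq]
  intro j k hpath hlt
  rcases lt_or_eq_of_le (hxm j) with h | h
  · exact h
  exfalso
  have hall : ∀ k, Relation.ReflTransGen (fun p q => a p q = 1) j k → x k = m := by
    intro k hpath
    induction hpath with
    | refl => exact h.symm
    | tail hjb hbk ih => exact (hstep _ ih).2 _ hbk
  have := (hstep k (hall k hpath)).1
  rw [this] at hlt
  exact lt_irrefl m hlt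

/-- Strict boundedness: if node `j` is (at least indirectly) connected to a node with
degree greater than the minimum, its generalized degree strictly exceeds the minimal
degree; dually for the maximum. -/
theorem generalizedDegree_strict_boundedness
    {n : ℕ} (hn : 0 < n) (A : Matrix (Fin n) (Fin n) ℝ) (hA : IsNetwork A)
    (ε : ℝ) (hε : 0 < ε) (x : Fin n → ℝ)
    (hx : ((1 : Matrix (Fin n) (Fin n) ℝ) + ε • lap A).mulVec x = deg A) :
    ∀ j : Fin n,
      ((∃ k : Fin n, Relation.ReflTransGen (fun a b => A a b = 1) j k ∧
          (⨅ i, deg A i) < deg A k) → (⨅ i, deg A i) < x j) ∧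
      ((∃ k : Fin n, Relation.ReflTransGen (fun a b => A a b = 1) j k ∧
          deg A k < ⨆ i, deg A i) → x j < ⨆ i, deg A i) := by
  have : Nonempty (Fin n) := ⟨⟨0, hn⟩⟩
  have hnn : ∀ i j, 0 ≤ A i j := fun i j => by
    rcases hA.2.2 i j with h | h <;> rw [h] <;> norm_num
  have heq : ∀ i, x i + ε * ((∑ j, A i j) * x i - ∑ j, A i j * x j) = deg A i := by
    intro i
    have h := congrFun hx i
    rw [Matrix.add_mulVec, Matrix.one_mulVec, Matrix.smul_mulVec, lap,
      Matrix.sub_mulVec] at h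
    simp only [Pi.add_apply, Pi.smul_apply, Pi.sub_apply, Matrix.mulVec_diagonal,
      Matrix.mulVec, dotProduct, smul_eq_mul, deg, Matrix.diagonal_apply, ite_mul,
      zero_mul, Finset.sum_ite_eq, Finset.mem_univ, if_true] at h ⊢
    linarith [h]
  have hneg : (⨅ i, -(deg A i)) = -(⨆ i, deg A i) := by
    apply le_antisymm
    · obtain ⟨i0, hi0⟩ := Finite.exists_max (deg A)
      have hsup : (⨆ i, deg A i) = deg A i0 :=
        le_antisymm (ciSup_le hi0) (le_ciSup ((Set.finite_range _).bddAbove) i0)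
      calc (⨅ i, -(deg A i)) ≤ -(deg A i0) := ciInf_le ((Set.finite_range _).bddBelow) i0
        _ = -(⨆ i, deg A i) := by rw [hsup]
    · exact le_ciInf fun i => neg_le_neg (le_ciSup ((Set.finite_range _).bddAbove) i)
  intro j
  constructor
  · rintro ⟨k, hpath, hlt⟩
    exact key_min hn A hnn (deg A) ε hε x (fun i => by rw [heq i]) j k hpath hlt
  · rintro ⟨k, hpath, hlt⟩
    have heq' : ∀ i, (-x i) + ε * ((∑ j, A i j) * (-x i) - ∑ j, A i j * (-x j)) = -(deg A i) := by
      intro i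
      have h := heq i
      have hs : ∑ j, A i j * (-x j) = -∑ j, A i j * x j := by
        rw [← Finset.sum_neg_distrib]; exact Finset.sum_congr rfl fun j _ => by ring
      rw [hs]; linarith [h]
    have hkey := key_min hn A hnn (fun i => -(deg A i)) ε hε (fun i => -x i) heq' j k hpath
      (by rw [hneg]; simpa using hlt)
    rw [hneg] at hkey
    simpa using hkey
end

section
/- Agreement at infinity: for every connected network on n ≥ 1 nodes, the generalized degree of every node converges to the average degree as the parameter tends to infinity, i.e. lim_{ε → ∞} x_j(ε) = (∑_{i ∈ N} d_i) / n for every node j ∈ N. -/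
open Matrix Filter

open Topology

/-!
Write `x = x(ε)`, so that `x + ε L x = d`. Pairing with `x` gives
`x·x + ε x·Lx = x·d ≤ (x·x + d·d)/2`, hence `x·Lx ≤ d·d / (2ε) → 0`. Since
`x·Lx = ½ ∑ a_ij (x_i - x_j)²`, the difference of `x` across every edge tends to `0`, and by
connectivity so does `x_i - x_j` for every pair of nodes. Finally `eᵀL = 0` gives
`∑ x_i = ∑ d_i`, which pins the common limit to the average degree.
-/

theorem two_mul_dotProduct_mulVec_le_of_one_add_smul_mulVec_eq {ι : Type*} [Fintype ι]
    [DecidableEq ι] (L : Matrix ι ι ℝ) {ε : ℝ} {x b : ι → ℝ} (h : (1 + ε • L) *ᵥ x = b) :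
    2 * ε * (x ⬝ᵥ L *ᵥ x) ≤ b ⬝ᵥ b := by
  have hpair : x ⬝ᵥ x + ε * (x ⬝ᵥ L *ᵥ x) = x ⬝ᵥ b := by
    rw [← h, add_mulVec, one_mulVec, smul_mulVec, dotProduct_add, dotProduct_smul, smul_eq_mul]
  have hsq : 0 ≤ (x - b) ⬝ᵥ (x - b) := by
    simpa using dotProduct_self_star_nonneg (x - b)
  have hx : 0 ≤ x ⬝ᵥ x := by simpa using dotProduct_self_star_nonneg x
  simp only [sub_dotProduct, dotProduct_sub, dotProduct_comm b x] at hsq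
  linarith

section Laplacian

variable {n : ℕ} {A : Matrix (Fin n) (Fin n) ℝ}

theorem lap_mulVec_apply (y : Fin n → ℝ) (i : Fin n) :
    (lap A *ᵥ y) i = ∑ j, A i j * (y i - y j) := by
  rw [lap, sub_mulVec, Pi.sub_apply, mulVec_diagonal, deg, Finset.sum_mul, mulVec, dotProduct,
    ← Finset.sum_sub_distrib]
  simp only [mul_sub]

theorem sum_lap_mulVec (hsym : ∀ i j, A i j = A j i) (y : Fin n → ℝ) :
    ∑ i, (lap A *ᵥ y) i = 0 := by
  simp only [lap_mulVec_apply, mul_sub, Finset.sum_sub_distrib]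
  rw [sub_eq_zero, Finset.sum_comm]
  exact Finset.sum_congr rfl fun i _ => Finset.sum_congr rfl fun j _ => by rw [hsym]

theorem dotProduct_lap_mulVec (hsym : ∀ i j, A i j = A j i) (y : Fin n → ℝ) :
    y ⬝ᵥ lap A *ᵥ y = (∑ i, ∑ j, A i j * (y i - y j) ^ 2) / 2 := by
  have hform : y ⬝ᵥ lap A *ᵥ y = ∑ i, ∑ j, A i j * (y i - y j) * y i := by
    simp only [dotProduct, lap_mulVec_apply, Finset.mul_sum]
    exact Finset.sum_congr rfl fun i _ => Finset.sum_congr rfl fun j _ => by ring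
  have hswap : ∑ i, ∑ j, A i j * (y i - y j) * y j = -∑ i, ∑ j, A i j * (y i - y j) * y i := by
    rw [Finset.sum_comm, ← Finset.sum_neg_distrib]
    refine Finset.sum_congr rfl fun i _ => ?_
    rw [← Finset.sum_neg_distrib]
    exact Finset.sum_congr rfl fun j _ => by rw [hsym]; ring
  have hsplit : ∑ i, ∑ j, A i j * (y i - y j) ^ 2
      = ∑ i, ∑ j, A i j * (y i - y j) * y i - ∑ i, ∑ j, A i j * (y i - y j) * y j := by
    simp only [← Finset.sum_sub_distrib]
    exact Finset.sum_congr rfl fun i _ => Finset.sum_congr rfl fun j _ => by ring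
  rw [hsplit, hswap, hform]
  ring

theorem mul_sq_sub_le_dotProduct_lap_mulVec (hsym : ∀ i j, A i j = A j i)
    (hnonneg : ∀ i j, 0 ≤ A i j) (y : Fin n → ℝ) (a b : Fin n) :
    A a b * (y a - y b) ^ 2 ≤ 2 * (y ⬝ᵥ lap A *ᵥ y) := by
  have hterm : ∀ i j, 0 ≤ A i j * (y i - y j) ^ 2 := fun i j =>
    mul_nonneg (hnonneg i j) (sq_nonneg _)
  calc A a b * (y a - y b) ^ 2 ≤ ∑ j, A a j * (y a - y j) ^ 2 :=
        Finset.single_le_sum (fun j _ => hterm a j) (Finset.mem_univ b)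
    _ ≤ ∑ i, ∑ j, A i j * (y i - y j) ^ 2 :=
        Finset.single_le_sum (fun i _ => Finset.sum_nonneg fun j _ => hterm i j)
          (Finset.mem_univ a)
    _ = 2 * (y ⬝ᵥ lap A *ᵥ y) := by rw [dotProduct_lap_mulVec hsym]; ring

theorem dotProduct_lap_mulVec_nonneg (hsym : ∀ i j, A i j = A j i)
    (hnonneg : ∀ i j, 0 ≤ A i j) (y : Fin n → ℝ) : 0 ≤ y ⬝ᵥ lap A *ᵥ y := by
  rw [dotProduct_lap_mulVec hsym]
  exact div_nonneg (Finset.sum_nonneg fun i _ => Finset.sum_nonneg fun j _ =>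
    mul_nonneg (hnonneg i j) (sq_nonneg _)) zero_le_two

theorem sum_eq_of_one_add_smul_lap_mulVec_eq (hsym : ∀ i j, A i j = A j i) {ε : ℝ}
    {x b : Fin n → ℝ} (h : (1 + ε • lap A) *ᵥ x = b) : ∑ i, x i = ∑ i, b i := by
  rw [← h, add_mulVec, one_mulVec, smul_mulVec]
  simp only [Pi.add_apply, Pi.smul_apply, smul_eq_mul, Finset.sum_add_distrib, ← Finset.mul_sum,
    sum_lap_mulVec hsym, mul_zero, add_zero]

theorem tendsto_sub_of_tendsto_dotProduct_lap_mulVec (hsym : ∀ i j, A i j = A j i)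
    (hnonneg : ∀ i j, 0 ≤ A i j) {α : Type*} {l : Filter α} {X : α → Fin n → ℝ}
    (hQ : Tendsto (fun t => X t ⬝ᵥ lap A *ᵥ X t) l (𝓝 0)) {a b : Fin n} (hab : A a b = 1) :
    Tendsto (fun t => X t a - X t b) l (𝓝 0) := by
  rw [tendsto_zero_iff_abs_tendsto_zero]
  have hroot : Tendsto (fun t => √(2 * (X t ⬝ᵥ lap A *ᵥ X t))) l (𝓝 0) := by
    simpa using (hQ.const_mul 2).sqrt
  refine squeeze_zero (fun _ => abs_nonneg _) (fun t => ?_) hroot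
  rw [Function.comp_apply, ← Real.sqrt_sq_eq_abs]
  refine Real.sqrt_le_sqrt ?_
  simpa [hab] using mul_sq_sub_le_dotProduct_lap_mulVec hsym hnonneg (X t) a b

end Laplacian

theorem IsNetwork.nonneg {n : ℕ} {A : Matrix (Fin n) (Fin n) ℝ} (hA : IsNetwork A) (i j : Fin n) :
    0 ≤ A i j := by
  rcases hA.2.2 i j with h | h <;> simp [h]

theorem tendsto_sub_of_reflTransGen {α ι : Type*} {l : Filter α} {X : α → ι → ℝ}
    {R : ι → ι → Prop} (hR : ∀ a b, R a b → Tendsto (fun t => X t a - X t b) l (𝓝 0))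
    {i j : ι} (hij : Relation.ReflTransGen R i j) : Tendsto (fun t => X t i - X t j) l (𝓝 0) := by
  induction hij with
  | refl => simpa using tendsto_const_nhds
  | tail _ hbc ih => simpa using ih.add (hR _ _ hbc)

theorem tendsto_of_tendsto_sub_of_sum_eq {α ι : Type*} [Fintype ι] {l : Filter α}
    {X : α → ι → ℝ} {s : ℝ} (hsub : ∀ i j, Tendsto (fun t => X t i - X t j) l (𝓝 0))
    (hsum : ∀ᶠ t in l, ∑ i, X t i = s) (j : ι) :
    Tendsto (fun t => X t j) l (𝓝 (s / Fintype.card ι)) := by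
  have : Nonempty ι := ⟨j⟩
  have hcard : (Fintype.card ι : ℝ) ≠ 0 := Nat.cast_ne_zero.mpr Fintype.card_pos.ne'
  have hdev : Tendsto (fun t => ∑ i, (X t j - X t i)) l (𝓝 0) := by
    simpa using tendsto_finsetSum Finset.univ fun i _ => hsub j i
  rw [← add_zero s]
  refine ((hdev.const_add s).div_const _).congr' ?_
  filter_upwards [hsum] with t ht
  rw [← ht, Finset.sum_sub_distrib, Finset.sum_const, Finset.card_univ, nsmul_eq_mul]
  field_simp
  ring

theorem generalizedDegree_agreement_at_infinity_general
    {n : ℕ} (A : Matrix (Fin n) (Fin n) ℝ) (hA : IsNetwork A)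
    (hconn : ∀ i j : Fin n, Relation.ReflTransGen (fun a b => A a b = 1) i j)
    (X : ℝ → Fin n → ℝ)
    (hX : ∀ ε : ℝ, 0 < ε →
      ((1 : Matrix (Fin n) (Fin n) ℝ) + ε • lap A).mulVec (X ε) = deg A) :
    ∀ j : Fin n,
      Filter.Tendsto (fun ε => X ε j) Filter.atTop (nhds ((∑ i, deg A i) / n)) := by
  have hQ : Tendsto (fun ε => X ε ⬝ᵥ lap A *ᵥ X ε) atTop (𝓝 0) := by
    have hbound : Tendsto (fun ε : ℝ => deg A ⬝ᵥ deg A / (2 * ε)) atTop (𝓝 0) :=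
      tendsto_const_nhds.div_atTop (tendsto_id.const_mul_atTop two_pos)
    refine squeeze_zero' (.of_forall fun ε => dotProduct_lap_mulVec_nonneg hA.1 hA.nonneg _)
      ?_ hbound
    filter_upwards [eventually_gt_atTop 0] with ε hε
    rw [le_div_iff₀ (by positivity), mul_comm]
    simpa [mul_assoc] using two_mul_dotProduct_mulVec_le_of_one_add_smul_mulVec_eq _ (hX ε hε)
  have hedge : ∀ a b, A a b = 1 → Tendsto (fun ε => X ε a - X ε b) atTop (𝓝 0) :=
    fun a b hab => tendsto_sub_of_tendsto_dotProduct_lap_mulVec hA.1 hA.nonneg hQ hab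
  have hsum : ∀ᶠ ε in atTop, ∑ i, X ε i = ∑ i, deg A i := by
    filter_upwards [eventually_gt_atTop 0] with ε hε
    exact sum_eq_of_one_add_smul_lap_mulVec_eq hA.1 (hX ε hε)
  intro j
  simpa using tendsto_of_tendsto_sub_of_sum_eq
    (fun i j => tendsto_sub_of_reflTransGen hedge (hconn i j)) hsum j

/-- Agreement at infinity: in a connected network, the generalized degree of every node
tends to the average degree as `ε → ∞`. -/
theorem generalizedDegree_agreement_at_infinity
    {n : ℕ} (hn : 0 < n) (A : Matrix (Fin n) (Fin n) ℝ) (hA : IsNetwork A)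
    (hconn : ∀ i j : Fin n, Relation.ReflTransGen (fun a b => A a b = 1) i j)
    (X : ℝ → Fin n → ℝ)
    (hX : ∀ ε : ℝ, 0 < ε →
      ((1 : Matrix (Fin n) (Fin n) ℝ) + ε • lap A).mulVec (X ε) = deg A) :
    ∀ j : Fin n,
      Filter.Tendsto (fun ε => X ε j) Filter.atTop (nhds ((∑ i, deg A i) / n)) :=
  generalizedDegree_agreement_at_infinity_general A hA hconn X hX
end

section
/- Star center base: let (N,A) be a star network on n ≥ 3 nodes with center i ∈ N, i.e. a_{ij} = 1 for all j ≠ i and a_{jk} = 0 for all j, k ∈ N \ {i}. Then for every ε > 0 and every j ∈ N \ {i}, the generalized degree satisfies x_i(ε) > x_j(ε); in fact x_i(ε) − x_j(ε) = (n − 2)/(1 + εn). -/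
open Matrix Filter

/-- Star center base: in a star network the center has the strictly largest generalized
degree; in fact the gap equals `(n-2)/(1+εn)`. -/
theorem generalizedDegree_star_center_base
    {n : ℕ} (hn : 3 ≤ n) (A : Matrix (Fin n) (Fin n) ℝ) (hA : IsNetwork A)
    (i : Fin n)
    (hcenter : ∀ j : Fin n, j ≠ i → A i j = 1)
    (hleaves : ∀ j k : Fin n, j ≠ i → k ≠ i → A j k = 0)
    (ε : ℝ) (hε : 0 < ε) (x : Fin n → ℝ)
    (hx : ((1 : Matrix (Fin n) (Fin n) ℝ) + ε • lap A).mulVec x = deg A) :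
    ∀ j : Fin n, j ≠ i →
      x i > x j ∧ x i - x j = ((n : ℝ) - 2) / (1 + ε * n) := by
  obtain ⟨hsym, hdiag, h01⟩ := hA
  have hn3 : (3 : ℝ) ≤ (n : ℝ) := by exact_mod_cast hn
  have hd1 : (0:ℝ) < 1 + ε := by linarith
  have hd2 : (0:ℝ) < 1 + ε * n := by nlinarith
  -- degrees
  have hdegleaf : ∀ j : Fin n, j ≠ i → deg A j = 1 := by
    intro j hj
    unfold deg
    rw [Finset.sum_eq_single i]
    · rw [hsym]; exact hcenter j hj
    · intro k _ hk; exact hleaves j k hj hk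
    · simp
  have hdegi : deg A i = (n : ℝ) - 1 := by
    unfold deg
    have h : ∀ k : Fin n, A i k = 1 - (if k = i then 1 else 0) := by
      intro k
      by_cases hk : k = i
      · simp [hk, hdiag]
      · simp [hk, hcenter k hk]
    simp_rw [h]
    rw [Finset.sum_sub_distrib, Finset.sum_const, Finset.sum_ite_eq']
    simp
  rw [Matrix.add_mulVec, Matrix.one_mulVec, Matrix.smul_mulVec] at hx
  have hrow : ∀ j, x j + ε * ((lap A).mulVec x j) = deg A j := by
    intro j
    have := congrFun hx j
    simpa using this
  have hlapapp : ∀ j, (lap A).mulVec x j = deg A j * x j - ∑ k, A j k * x k := by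
    intro j
    simp [lap, Matrix.mulVec, dotProduct, Matrix.sub_apply, Matrix.diagonal, sub_mul,
      Finset.sum_sub_distrib, ite_mul, Finset.sum_ite_eq]
  -- leaf equations
  have hleafeq : ∀ j, j ≠ i → x j * (1 + ε) = 1 + ε * x i := by
    intro j hj
    have h1 := hrow j
    rw [hlapapp j, hdegleaf j hj] at h1
    have h2 : ∑ k, A j k * x k = x i := by
      rw [Finset.sum_eq_single i]
      · rw [hsym, hcenter j hj, one_mul]
      · intro k _ hk; rw [hleaves j k hj hk, zero_mul]
      · simp
    rw [h2] at h1
    linear_combination h1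
  -- center equation
  have hcen := hrow i
  rw [hlapapp i, hdegi] at hcen
  have hsumA : ∑ k, A i k * x k = ((n : ℝ) - 1) * ((1 + ε * x i) / (1 + ε)) := by
    have h : ∀ k : Fin n, A i k * x k
        = (1 + ε * x i) / (1 + ε) - (if k = i then (1 + ε * x i) / (1 + ε) else 0) := by
      intro k
      by_cases hk : k = i
      · simp [hk, hdiag]
      · have := hleafeq k hk
        have hxk : x k = (1 + ε * x i) / (1 + ε) := by
          field_simp
          linarith [this]
        simp [hk, hcenter k hk, hxk]
    simp_rw [h]
    rw [Finset.sum_sub_distrib, Finset.sum_const, Finset.sum_ite_eq']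
    simp
    ring
  rw [hsumA] at hcen
  -- solve for x i
  have hxi : x i * (1 + ε * n) = ((n : ℝ) - 1) * (1 + 2 * ε) := by
    have h := hcen
    field_simp at h
    linear_combination h
  intro j hj
  have ht := hleafeq j hj
  have key : x i - x j = ((n : ℝ) - 2) / (1 + ε * n) := by
    rw [eq_div_iff (ne_of_gt hd2)]
    have h3 : (x i - x j) * (1 + ε) = x i - 1 := by linear_combination -ht
    have h4 : ((x i - x j) * (1 + ε * n)) * (1 + ε) = (((n:ℝ) - 2)) * (1 + ε) := by
      linear_combination (1 + ε * (n:ℝ)) * h3 + hxi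
    exact mul_right_cancel₀ (ne_of_gt hd1) h4
  refine ⟨?_, key⟩
  have : (0:ℝ) < ((n : ℝ) - 2) / (1 + ε * n) := div_pos (by linarith) hd2
  linarith [key, this]
end

section
/- Explicit generalized degree of a star: let (N,A) be a star network on n ≥ 3 nodes with center i ∈ N, i.e. a_{ij} = 1 for all j ≠ i and a_{jk} = 0 for all j, k ∈ N \ {i}. Then for every ε > 0, x_i(ε) = (n−1)(1 + 2ε)/(1 + εn) and x_j(ε) = (1 + ε(2n−1) + 2ε²(n−1)) / ((1 + ε)(1 + εn)) for every j ∈ N \ {i}. -/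
open Matrix Filter

/-- Explicit generalized degree of a star network on `n ≥ 3` nodes with center `i`. -/
theorem generalizedDegree_star_explicit
    {n : ℕ} (hn : 3 ≤ n) (A : Matrix (Fin n) (Fin n) ℝ) (hA : IsNetwork A)
    (i : Fin n)
    (hcenter : ∀ j : Fin n, j ≠ i → A i j = 1)
    (hleaves : ∀ j k : Fin n, j ≠ i → k ≠ i → A j k = 0)
    (ε : ℝ) (hε : 0 < ε) (x : Fin n → ℝ)
    (hx : ((1 : Matrix (Fin n) (Fin n) ℝ) + ε • lap A).mulVec x = deg A) :
    x i = ((n : ℝ) - 1) * (1 + 2 * ε) / (1 + ε * n) ∧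
      ∀ j : Fin n, j ≠ i →
        x j = (1 + ε * (2 * n - 1) + 2 * ε ^ 2 * ((n : ℝ) - 1)) /
          ((1 + ε) * (1 + ε * n)) := by
  obtain ⟨hsymm, hloop, h01⟩ := hA
  have hnR : (3 : ℝ) ≤ (n : ℝ) := by exact_mod_cast hn
  -- degrees
  have key : ∀ c : ℝ, (∑ j : Fin n, if j = i then 0 else c) = ((n : ℝ) - 1) * c := by
    intro c
    have h2 : ∀ j : Fin n, (if j = i then (0:ℝ) else c) = c - (if j = i then c else 0) := by
      intro j; by_cases h : j = i <;> simp [h]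
    simp only [h2, Finset.sum_sub_distrib, Finset.sum_const,
      Finset.sum_ite_eq' Finset.univ i (fun _ => c), Finset.card_univ, Fintype.card_fin,
      Finset.mem_univ, if_true, nsmul_eq_mul]
    ring
  have hdegi : deg A i = (n : ℝ) - 1 := by
    have : deg A i = ∑ j, if j = i then 0 else 1 := by
      unfold deg
      refine Finset.sum_congr rfl fun j _ => ?_
      by_cases hj : j = i
      · simp [hj, hloop]
      · simp [hj, hcenter j hj]
    rw [this, key]
    ring
  have hdegj : ∀ j : Fin n, j ≠ i → deg A j = 1 := by
    intro j hj
    unfold deg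
    rw [Finset.sum_eq_single i]
    · rw [hsymm, hcenter j hj]
    · intro k _ hk; exact hleaves j k hj hk
    · simp
  -- row equations
  have hrow : ∀ k : Fin n, x k + ε * (deg A k * x k - ∑ l, A k l * x l) = deg A k := by
    intro k
    have h := congrFun hx k
    rw [mulVec, dotProduct] at h
    have : ∑ l, ((1 : Matrix (Fin n) (Fin n) ℝ) + ε • lap A) k l * x l
        = x k + ε * (deg A k * x k - ∑ l, A k l * x l) := by
      have h1 : ∀ l, ((1 : Matrix (Fin n) (Fin n) ℝ) + ε • lap A) k l * x l
          = (if k = l then x l + ε * (deg A k * x l) else 0) - ε * (A k l * x l) := by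
        intro l
        simp only [Matrix.add_apply, Matrix.one_apply, Matrix.smul_apply, lap,
          Matrix.sub_apply, Matrix.diagonal_apply, smul_eq_mul]
        by_cases hkl : k = l <;> simp [hkl] <;> ring
      simp only [h1]
      rw [Finset.sum_sub_distrib, Finset.sum_ite_eq Finset.univ k, ← Finset.mul_sum]
      simp only [Finset.mem_univ, if_true]
      ring
    rw [this] at h
    exact h
  -- leaf sums
  have hsumj : ∀ j : Fin n, j ≠ i → ∑ l, A j l * x l = x i := by
    intro j hj
    rw [Finset.sum_eq_single i]
    · rw [hsymm, hcenter j hj, one_mul]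
    · intro k _ hk; rw [hleaves j k hj hk, zero_mul]
    · simp
  have hleaf : ∀ j : Fin n, j ≠ i → x j * (1 + ε) = 1 + ε * x i := by
    intro j hj
    have h := hrow j
    rw [hdegj j hj, hsumj j hj] at h
    ring_nf at h ⊢
    linarith
  have h1ε : (1 : ℝ) + ε ≠ 0 := by positivity
  have hxj : ∀ j : Fin n, j ≠ i → x j = (1 + ε * x i) / (1 + ε) := by
    intro j hj
    field_simp
    linarith [hleaf j hj]
  -- center sum
  have hsumi : ∑ l, A i l * x l = ((n : ℝ) - 1) * ((1 + ε * x i) / (1 + ε)) := by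
    have : ∑ l, A i l * x l = ∑ l, if l = i then 0 else (1 + ε * x i) / (1 + ε) := by
      refine Finset.sum_congr rfl fun l _ => ?_
      by_cases hl : l = i
      · simp [hl, hloop]
      · rw [hcenter l hl, one_mul, hxj l hl, if_neg hl]
    rw [this, key]
  have hxi : x i = ((n : ℝ) - 1) * (1 + 2 * ε) / (1 + ε * n) := by
    have h := hrow i
    rw [hdegi, hsumi] at h
    have hεn : (1 : ℝ) + ε * n ≠ 0 := by positivity
    field_simp at h ⊢
    nlinarith [h]
  refine ⟨hxi, fun j hj => ?_⟩
  rw [hxj j hj, hxi]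
  have hεn : (1 : ℝ) + ε * n ≠ 0 := by positivity
  field_simp
  ring
end
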